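/- The polynomial q(x) = 8x⁴ + 14x³ − 11x² − 11x − 2 is irreducible over ℚ, and for any root β of q in ℂ, the quartic number field ℚ(β) is a Galois extension of ℚ whose Galois group is cyclic of order 4; i.e. ℚ(β) is a cyclic quartic number field. -/

import Mathlib

open Polynomial
open scoped IntermediateField

/-!
After the substitution `x = y / 4`, which makes `q` monic, `q` is irreducible because it is
irreducible modulo `3`; hence `ℚ(β)` has degree `4`. The cubic
`θ(y) = 6 + 27y/2 - 12y² - 8y³` maps roots of `q` to roots of `q`, with `θ⁴ = id` on them while
`θ²(β) ≠ β` (otherwise `β` would be a root of a nonzero cubic). So `β ↦ θ(β)` extends to an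
automorphism of `ℚ(β)` of order `4 = [ℚ(β) : ℚ]`, which forces the extension to be Galois with
cyclic group generated by it.
-/

namespace Polynomial

theorem Monic.eq_X_sq_add_C_mul_X_add_C {R : Type*} [CommSemiring R] {p : R[X]} (hp : p.Monic)
    (h : p.natDegree = 2) :
    p = X ^ 2 + C (p.coeff 1) * X + C (p.coeff 0) := by
  conv_lhs => rw [hp.as_sum, h]
  simp only [Finset.sum_range_succ, Finset.sum_range_zero, pow_zero, pow_one, mul_one, zero_add]
  ring

theorem Monic.irreducible_of_natDegree_eq_four {R : Type*} [CommRing R] [IsDomain R] {p : R[X]}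
    (hp : p.Monic) (hdeg : p.natDegree = 4) (hroot : ∀ x, ¬ p.IsRoot x)
    (hquad : ∀ a b c d : R, p ≠ (X ^ 2 + C a * X + C b) * (X ^ 2 + C c * X + C d)) :
    Irreducible p := by
  refine hp.irreducible_iff_natDegree'.mpr ⟨fun h ↦ by simp [h] at hdeg, ?_⟩
  rintro f g hf hg rfl hg_deg
  rw [hdeg, Finset.mem_Ioc] at hg_deg
  have hfg_deg : f.natDegree + g.natDegree = 4 := hf.natDegree_mul hg ▸ hdeg
  obtain hg1 | hg2 : g.natDegree = 1 ∨ g.natDegree = 2 := by omega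
  · exact hroot (-g.coeff 0) (by rw [hg.eq_X_add_C hg1]; simp)
  · exact hquad _ _ _ _ (congrArg₂ (· * ·) (hf.eq_X_sq_add_C_mul_X_add_C (by omega))
      (hg.eq_X_sq_add_C_mul_X_add_C hg2))

end Polynomial

section

variable {F E : Type*} [Field F] [Field E] [Algebra F E] {α : E}

open IntermediateField in
theorem IntermediateField.exists_algEquiv_gen_eq (hα : IsIntegral F α) {y : F⟮α⟯}
    (hy : aeval y (minpoly F α) = 0) :
    ∃ σ : F⟮α⟯ ≃ₐ[F] F⟮α⟯, σ (AdjoinSimple.gen F α) = y := by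
  have := adjoin.finiteDimensional hα
  let pb := adjoin.powerBasis hα
  let φ := pb.lift y (by rwa [adjoin.powerBasis_gen, minpoly_gen])
  refine ⟨AlgEquiv.ofBijective φ φ.bijective, ?_⟩
  rw [AlgEquiv.ofBijective_apply, ← adjoin.powerBasis_gen hα]
  exact pb.lift_gen y _

open IntermediateField in
theorem IntermediateField.AdjoinSimple.pow_eq_one_iff_iterate_gen {σ : F⟮α⟯ ≃ₐ[F] F⟮α⟯}
    {f : F⟮α⟯ → F⟮α⟯} (hf : ∀ y, σ (f y) = f (σ y)) (hσ : σ (gen F α) = f (gen F α)) (n : ℕ) :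
    σ ^ n = 1 ↔ f^[n] (gen F α) = gen F α := by
  rw [← (Function.Commute.iterate_eq_of_map_eq hf n hσ), ← AlgEquiv.coe_pow]
  constructor
  · intro h; rw [h]; rfl
  · intro h
    refine AlgEquiv.coe_toAlgHom_injective (adjoin_algHom_ext F ?_)
    rintro _ rfl
    exact h

end

theorem card_algEquiv_eq_finrank_of_orderOf_eq {F K : Type*} [Field F] [Field K] [Algebra F K]
    [FiniteDimensional F K] {σ : K ≃ₐ[F] K} (hσ : orderOf σ = Module.finrank F K) :
    Nat.card (K ≃ₐ[F] K) = Module.finrank F K :=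
  le_antisymm (Nat.card_eq_fintype_card (α := K ≃ₐ[F] K) ▸ AlgEquiv.card_le)
    (hσ ▸ orderOf_le_card)

theorem irreducible_monicQuartic_zmod_three :
    Irreducible (X ^ 4 + X ^ 3 - X ^ 2 - X - 1 : (ZMod 3)[X]) := by
  refine Monic.irreducible_of_natDegree_eq_four (by monicity!) (by compute_degree!) ?_ ?_
  · intro x
    simp only [IsRoot, eval_sub, eval_add, eval_pow, eval_X, eval_one]
    revert x
    decide
  · intro a b c d h
    have hexpand : (X ^ 2 + C a * X + C b) * (X ^ 2 + C c * X + C d) =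
        X ^ 4 + C (a + c) * X ^ 3 + C (b + d + a * c) * X ^ 2 + C (a * d + b * c) * X
          + C (b * d) := by
      simp only [C_add, C_mul]; ring
    rw [hexpand] at h
    have h0 := congrArg (coeff · 0) h
    have h1 := congrArg (coeff · 1) h
    have h2 := congrArg (coeff · 2) h
    have h3 := congrArg (coeff · 3) h
    simp only [coeff_add, coeff_sub, coeff_C_mul, coeff_X_pow, coeff_C, coeff_X, coeff_one]
      at h0 h1 h2 h3
    norm_num at h0 h1 h2 h3
    clear h hexpand
    revert a b c d
    decide

theorem irreducible_monicQuartic_int :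
    Irreducible (X ^ 4 + 7 * X ^ 3 - 22 * X ^ 2 - 88 * X - 64 : ℤ[X]) := by
  refine Monic.irreducible_of_irreducible_map (Int.castRingHom (ZMod 3)) _ (by monicity!) ?_
  convert irreducible_monicQuartic_zmod_three using 1
  simp only [Polynomial.map_sub, Polynomial.map_add, Polynomial.map_mul, Polynomial.map_pow,
    map_X, Polynomial.map_ofNat]
  reduce_mod_char

theorem irreducible_monicQuartic_rat :
    Irreducible (X ^ 4 + 7 * X ^ 3 - 22 * X ^ 2 - 88 * X - 64 : ℚ[X]) := by
  have hmonic : (X ^ 4 + 7 * X ^ 3 - 22 * X ^ 2 - 88 * X - 64 : ℤ[X]).Monic := by monicity!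
  simpa using (IsPrimitive.Int.irreducible_iff_irreducible_map_cast hmonic.isPrimitive).mp
    irreducible_monicQuartic_int

theorem irreducible_quartic :
    Irreducible (8 * X ^ 4 + 14 * X ^ 3 - 11 * X ^ 2 - 11 * X - 2 : ℚ[X]) := by
  let : Invertible (4 : ℚ) := invertibleOfNonzero four_ne_zero
  have hscale : algEquivCMulXAddC (4 : ℚ) 0 (X ^ 4 + 7 * X ^ 3 - 22 * X ^ 2 - 88 * X - 64) =
      (8 * X ^ 4 + 14 * X ^ 3 - 11 * X ^ 2 - 11 * X - 2) * C 32 := by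
    simp only [algEquivCMulXAddC_apply, map_add, map_sub, map_mul, map_pow, map_ofNat, aeval_X,
      map_zero]
    ring
  have := (MulEquiv.irreducible_iff (algEquivCMulXAddC (4 : ℚ) 0)).mpr irreducible_monicQuartic_rat
  rw [hscale] at this
  exact (irreducible_mul_isUnit (isUnit_C.mpr (by norm_num))).mp this

theorem aeval_quartic {K : Type*} [Field K] [Algebra ℚ K] (x : K) :
    aeval x (8 * X ^ 4 + 14 * X ^ 3 - 11 * X ^ 2 - 11 * X - 2 : ℚ[X]) =
      8 * x ^ 4 + 14 * x ^ 3 - 11 * x ^ 2 - 11 * x - 2 := by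
  simp [map_ofNat]

theorem aeval_minpoly_eq_zero {K : Type*} [Field K] [Algebra ℚ K] {x y : K}
    (hx : 8 * x ^ 4 + 14 * x ^ 3 - 11 * x ^ 2 - 11 * x - 2 = 0)
    (hy : 8 * y ^ 4 + 14 * y ^ 3 - 11 * y ^ 2 - 11 * y - 2 = 0) :
    aeval y (minpoly ℚ x) = 0 := by
  rw [← minpoly.eq_of_irreducible irreducible_quartic ((aeval_quartic x).trans hx), aeval_mul,
    aeval_quartic, hy, zero_mul]

theorem natDegree_minpoly_eq_four {K : Type*} [Field K] [Algebra ℚ K] {x : K}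
    (hx : 8 * x ^ 4 + 14 * x ^ 3 - 11 * x ^ 2 - 11 * x - 2 = 0) :
    (minpoly ℚ x).natDegree = 4 := by
  rw [← minpoly.eq_of_irreducible irreducible_quartic ((aeval_quartic x).trans hx),
    natDegree_mul_C (inv_ne_zero (leadingCoeff_ne_zero.mpr irreducible_quartic.ne_zero))]
  compute_degree!

def rootCycle {K : Type*} [Field K] (y : K) : K := 6 + 27 / 2 * y - 12 * y ^ 2 - 8 * y ^ 3

section

variable {K : Type*} [Field K]

theorem map_rootCycle {L F : Type*} [Field L] [FunLike F K L] [RingHomClass F K L] (φ : F)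
    (y : K) : φ (rootCycle y) = rootCycle (φ y) := by
  simp [rootCycle, map_ofNat, map_div₀]

variable {x : K}

theorem quartic_rootCycle_eq_zero [CharZero K]
    (hx : 8 * x ^ 4 + 14 * x ^ 3 - 11 * x ^ 2 - 11 * x - 2 = 0) :
    8 * rootCycle x ^ 4 + 14 * rootCycle x ^ 3 - 11 * rootCycle x ^ 2 - 11 * rootCycle x - 2 =
      0 := by
  unfold rootCycle
  linear_combination (4096 * x ^ 8 + 17408 * x ^ 7 + 2816 * x ^ 6 - 57664 * x ^ 5 - 25488 * x ^ 4
    + 67932 * x ^ 3 + 17709 * x ^ 2 - 81379 / 4 * x - 6464) * hx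

theorem rootCycle_iterate_two [CharZero K]
    (hx : 8 * x ^ 4 + 14 * x ^ 3 - 11 * x ^ 2 - 11 * x - 2 = 0) :
    rootCycle^[2] x = -14 - 133 / 4 * x + 51 / 2 * x ^ 2 + 18 * x ^ 3 := by
  simp only [Function.iterate_succ_apply, Function.iterate_zero_apply, rootCycle]
  linear_combination (512 * x ^ 5 + 1408 * x ^ 4 - 896 * x ^ 3 - 3088 * x ^ 2 + 1034 * x
    + 2059 / 2) * hx

theorem rootCycle_iterate_four [CharZero K]
    (hx : 8 * x ^ 4 + 14 * x ^ 3 - 11 * x ^ 2 - 11 * x - 2 = 0) :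
    rootCycle^[4] x = x := by
  have hx₂ : 8 * (rootCycle^[2] x) ^ 4 + 14 * (rootCycle^[2] x) ^ 3 - 11 * (rootCycle^[2] x) ^ 2
      - 11 * rootCycle^[2] x - 2 = 0 :=
    quartic_rootCycle_eq_zero (quartic_rootCycle_eq_zero hx)
  rw [show 4 = 2 + 2 from rfl, Function.iterate_add_apply, rootCycle_iterate_two hx₂,
    rootCycle_iterate_two hx]
  linear_combination (13122 * x ^ 5 + 32805 * x ^ 4 - 264627 / 8 * x ^ 3 - 77274 * x ^ 2
    + 1366227 / 32 * x + 87885 / 4) * hx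

theorem rootCycle_iterate_two_ne [Algebra ℚ K]
    (hx : 8 * x ^ 4 + 14 * x ^ 3 - 11 * x ^ 2 - 11 * x - 2 = 0) :
    rootCycle^[2] x ≠ x := by
  have := algebraRat.charZero K
  intro h
  rw [rootCycle_iterate_two hx] at h
  have hcubic : aeval x (72 * X ^ 3 + 102 * X ^ 2 - 137 * X - 56 : ℚ[X]) = 0 := by
    simp only [map_sub, map_add, map_mul, map_pow, map_ofNat, aeval_X]
    linear_combination 4 * h
  have hdeg : (72 * X ^ 3 + 102 * X ^ 2 - 137 * X - 56 : ℚ[X]).natDegree = 3 := by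
    compute_degree!
  have hle := natDegree_le_natDegree <| minpoly.degree_le_of_ne_zero ℚ x
    (fun h0 ↦ by simp [h0] at hdeg) hcubic
  rw [natDegree_minpoly_eq_four hx, hdeg] at hle
  omega

end

/-- The polynomial `q(x) = 8x⁴ + 14x³ - 11x² - 11x - 2` is irreducible over
`ℚ`, and for any root `β ∈ ℂ` of `q`, the quartic number field `ℚ(β)` is a Galois extension
of `ℚ` whose Galois group is cyclic of order `4`; i.e. `ℚ(β)` is a cyclic quartic number
field. -/
theorem cyclic_quartic_field_beta
    (q : ℚ[X]) (hq : q = 8 * X ^ 4 + 14 * X ^ 3 - 11 * X ^ 2 - 11 * X - 2) :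
    Irreducible q ∧
    ∀ β : ℂ, aeval β q = 0 →
      Module.finrank ℚ ℚ⟮β⟯ = 4 ∧
      IsGalois ℚ ℚ⟮β⟯ ∧
      IsCyclic (ℚ⟮β⟯ ≃ₐ[ℚ] ℚ⟮β⟯) ∧
      Nat.card (ℚ⟮β⟯ ≃ₐ[ℚ] ℚ⟮β⟯) = 4 := by
  subst hq
  refine ⟨irreducible_quartic, fun β hβ ↦ ?_⟩
  have hint : IsIntegral ℚ β :=
    isAlgebraic_iff_isIntegral.mp ⟨_, irreducible_quartic.ne_zero, hβ⟩
  set b := IntermediateField.AdjoinSimple.gen ℚ β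
  have hb : 8 * b ^ 4 + 14 * b ^ 3 - 11 * b ^ 2 - 11 * b - 2 = 0 := by
    rwa [← aeval_quartic, ← aeval_algebraMap_eq_zero_iff ℂ,
      IntermediateField.AdjoinSimple.algebraMap_gen]
  have hrank : Module.finrank ℚ ℚ⟮β⟯ = 4 := by
    rw [IntermediateField.adjoin.finrank hint, ← IntermediateField.minpoly_gen]
    exact natDegree_minpoly_eq_four hb
  have hroot : aeval (rootCycle b) (minpoly ℚ β) = 0 := by
    rw [← IntermediateField.minpoly_gen]
    exact aeval_minpoly_eq_zero hb (quartic_rootCycle_eq_zero hb)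
  obtain ⟨σ, hσ⟩ := IntermediateField.exists_algEquiv_gen_eq hint hroot
  have hpow := IntermediateField.AdjoinSimple.pow_eq_one_iff_iterate_gen (map_rootCycle σ) hσ
  have hord : orderOf σ = 4 := orderOf_eq_prime_pow (p := 2) (n := 1)
    (mt (hpow 2).mp (rootCycle_iterate_two_ne hb)) ((hpow 4).mpr (rootCycle_iterate_four hb))
  have := IntermediateField.adjoin.finiteDimensional hint
  have hcard := card_algEquiv_eq_finrank_of_orderOf_eq (hord.trans hrank.symm)
  exact ⟨hrank, .of_card_aut_eq_finrank _ _ hcard,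
    isCyclic_of_orderOf_eq_card σ (hord.trans (hcard.trans hrank).symm), hcard.trans hrank⟩
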